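/- arXiv:2508.15671 — 3 statements merged into one kernel-verified Lean document; each statement's English description precedes it below -/
import Mathlib

section
/- For a unit-norm sequence x ∈ ℂ^{MN}, the set of pairs (k,l) ∈ ℤ_{MN} × ℤ_{MN} with |A_x[k,l]| = 1 has cardinality at most MN. -/
open Complex BigOperators Finset

/-- The character `a ↦ e^{2πi a / Q}` on `ZMod Q` (well defined since it only
depends on the residue of the exponent modulo `Q`). -/
noncomputable def ch (Q : ℕ) (a : ZMod Q) : ℂ :=
  Complex.exp (2 * Real.pi * Complex.I * a.val / Q)

/-- The Heisenberg operator `D_{(k,l)}` acting on `Q`-periodic sequences: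
`(D_{(k,l)} x)[n] = x[n-k] e^{2πi l (n-k)/Q}`. -/
noncomputable def HeisD (Q : ℕ) (k l : ZMod Q) (x : ZMod Q → ℂ) : ZMod Q → ℂ :=
  fun n => x (n - k) * ch Q (l * (n - k))

/-- The (cross-)ambiguity function
`A_{x,y}[k,l] = Σ_n x[n] conj(y[n-k]) e^{-2πi l (n-k)/Q}`. -/
noncomputable def Amb (Q : ℕ) [NeZero Q] (x y : ZMod Q → ℂ) (k l : ZMod Q) : ℂ :=
  ∑ n : ZMod Q, x n * (starRingEnd ℂ) (y (n - k)) * (starRingEnd ℂ) (ch Q (l * (n - k)))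

lemma zeta_pow (Q : ℕ) [NeZero Q] : (Complex.exp (2 * Real.pi * Complex.I / Q)) ^ Q = 1 := by
  have := Complex.isPrimitiveRoot_exp Q (NeZero.ne Q)
  simpa using this.pow_eq_one

lemma ch_eq_zmodChar (Q : ℕ) [NeZero Q] (a : ZMod Q) :
    ch Q a = AddChar.zmodChar Q (zeta_pow Q) a := by
  rw [AddChar.zmodChar_apply, ch, ← Complex.exp_nat_mul]
  ring_nf

lemma ch_add (Q : ℕ) [NeZero Q] (a b : ZMod Q) : ch Q (a + b) = ch Q a * ch Q b := by
  simp only [ch_eq_zmodChar]; exact AddChar.map_add_eq_mul _ a b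

lemma ch_neg (Q : ℕ) [NeZero Q] (a : ZMod Q) : ch Q (-a) = (ch Q a)⁻¹ := by
  simp only [ch_eq_zmodChar]; exact AddChar.map_neg_eq_inv _ a

lemma conj_ch (Q : ℕ) [NeZero Q] (a : ZMod Q) :
    (starRingEnd ℂ) (ch Q a) = ch Q (-a) := by
  rw [ch_neg, ch, ← Complex.exp_conj, ← Complex.exp_neg]
  congr 1
  simp only [map_div₀, map_mul, Complex.conj_I, Complex.conj_natCast, Complex.conj_ofReal,
    map_ofNat]
  ring

lemma ch_sum (Q : ℕ) [NeZero Q] (b : ZMod Q) :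
    ∑ l : ZMod Q, ch Q (l * b) = if b = 0 then (Q : ℂ) else 0 := by
  simp only [ch_eq_zmodChar]
  have hprim := AddChar.zmodChar_primitive_of_primitive_root Q
      (Complex.isPrimitiveRoot_exp Q (NeZero.ne Q))
  have := AddChar.sum_mulShift (ψ := AddChar.zmodChar Q (zeta_pow Q)) b hprim
  simpa [ZMod.card] using this

lemma conj_Amb (Q : ℕ) [NeZero Q] (x : ZMod Q → ℂ) (k l : ZMod Q) :
    (starRingEnd ℂ) (Amb Q x x k l)
      = ∑ m : ZMod Q, (starRingEnd ℂ) (x m) * x (m - k) * ch Q (l * (m - k)) := by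
  rw [Amb, map_sum]
  refine Finset.sum_congr rfl fun m _ => ?_
  simp only [map_mul, Complex.conj_conj]

lemma moyal_complex (Q : ℕ) [NeZero Q] (x : ZMod Q → ℂ) :
    ∑ k : ZMod Q, ∑ l : ZMod Q, Amb Q x x k l * (starRingEnd ℂ) (Amb Q x x k l)
      = (Q : ℂ) * ∑ k : ZMod Q, ∑ n : ZMod Q,
          (Complex.normSq (x n) : ℂ) * (Complex.normSq (x (n - k)) : ℂ) := by
  have hch : ∀ k n m : ZMod Q,
      ∑ l : ZMod Q, (starRingEnd ℂ) (ch Q (l * (n - k))) * ch Q (l * (m - k))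
        = if m = n then (Q : ℂ) else 0 := by
    intro k n m
    have harg : ∀ l : ZMod Q, -(l * (n - k)) + l * (m - k) = l * (m - n) := by
      intro l; ring
    calc ∑ l : ZMod Q, (starRingEnd ℂ) (ch Q (l * (n - k))) * ch Q (l * (m - k))
        = ∑ l : ZMod Q, ch Q (l * (m - n)) := by
          refine Finset.sum_congr rfl fun l _ => ?_
          rw [conj_ch, ← ch_add, harg l]
      _ = if m - n = 0 then (Q : ℂ) else 0 := ch_sum Q (m - n)
      _ = if m = n then (Q : ℂ) else 0 := by simp [sub_eq_zero]
  have h1 : ∀ k l : ZMod Q, Amb Q x x k l * (starRingEnd ℂ) (Amb Q x x k l)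
      = ∑ n : ZMod Q, ∑ m : ZMod Q,
          (x n * (starRingEnd ℂ) (x (n - k)) * (starRingEnd ℂ) (x m) * x (m - k))
            * ((starRingEnd ℂ) (ch Q (l * (n - k))) * ch Q (l * (m - k))) := by
    intro k l
    rw [conj_Amb, Amb, Finset.sum_mul_sum]
    exact Finset.sum_congr rfl fun n _ => Finset.sum_congr rfl fun m _ => by ring
  calc ∑ k : ZMod Q, ∑ l : ZMod Q, Amb Q x x k l * (starRingEnd ℂ) (Amb Q x x k l)
      = ∑ k : ZMod Q, ∑ n : ZMod Q, ∑ m : ZMod Q,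
          (x n * (starRingEnd ℂ) (x (n - k)) * (starRingEnd ℂ) (x m) * x (m - k))
            * ∑ l : ZMod Q, ((starRingEnd ℂ) (ch Q (l * (n - k))) * ch Q (l * (m - k))) := by
        refine Finset.sum_congr rfl fun k _ => ?_
        simp only [h1]
        rw [Finset.sum_comm]
        refine Finset.sum_congr rfl fun n _ => ?_
        rw [Finset.sum_comm]
        exact Finset.sum_congr rfl fun m _ => (Finset.mul_sum _ _ _).symm
    _ = ∑ k : ZMod Q, ∑ n : ZMod Q,
          (x n * (starRingEnd ℂ) (x (n - k)) * (starRingEnd ℂ) (x n) * x (n - k)) * Q := by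
        refine Finset.sum_congr rfl fun k _ => Finset.sum_congr rfl fun n _ => ?_
        rw [show (∑ m : ZMod Q,
          (x n * (starRingEnd ℂ) (x (n - k)) * (starRingEnd ℂ) (x m) * x (m - k))
            * ∑ l : ZMod Q, ((starRingEnd ℂ) (ch Q (l * (n - k))) * ch Q (l * (m - k))))
          = ∑ m : ZMod Q, if m = n then
              (x n * (starRingEnd ℂ) (x (n - k)) * (starRingEnd ℂ) (x m) * x (m - k)) * Q
            else 0 from Finset.sum_congr rfl fun m _ => by rw [hch, mul_ite, mul_zero]]
        rw [Finset.sum_ite_eq' Finset.univ n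
          (fun m => (x n * (starRingEnd ℂ) (x (n - k)) * (starRingEnd ℂ) (x m) * x (m - k)) * Q)]
        simp
    _ = (Q : ℂ) * ∑ k : ZMod Q, ∑ n : ZMod Q,
          (Complex.normSq (x n) : ℂ) * (Complex.normSq (x (n - k)) : ℂ) := by
        rw [Finset.mul_sum]
        refine Finset.sum_congr rfl fun k _ => ?_
        rw [Finset.mul_sum]
        refine Finset.sum_congr rfl fun n _ => ?_
        rw [← Complex.mul_conj, ← Complex.mul_conj]
        ring


/-- For a unit-norm sequence `x ∈ ℂ^Q`, the set of delay-Doppler pairs `(k,l)` where the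
self-ambiguity function is unimodular has cardinality at most `Q`. -/
theorem unimodular_ambiguity_card (Q : ℕ) [NeZero Q] (x : ZMod Q → ℂ)
    (hx : ∑ n : ZMod Q, ‖x n‖ ^ 2 = 1) :
    (Finset.univ.filter
        (fun p : ZMod Q × ZMod Q => ‖Amb Q x x p.1 p.2‖ = 1)).card ≤ Q := by
  have hx' : ∑ n : ZMod Q, Complex.normSq (x n) = 1 := by
    simpa [Complex.normSq_eq_norm_sq] using hx
  -- total energy is Q
  have hmoyal : ∑ p : ZMod Q × ZMod Q, Complex.normSq (Amb Q x x p.1 p.2) = Q := by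
    have hC : (↑(∑ p : ZMod Q × ZMod Q, Complex.normSq (Amb Q x x p.1 p.2)) : ℂ) = (Q : ℂ) := by
      push_cast
      rw [Fintype.sum_prod_type]
      rw [show (∑ k : ZMod Q, ∑ l : ZMod Q, ((Complex.normSq (Amb Q x x k l) : ℂ)))
          = ∑ k : ZMod Q, ∑ l : ZMod Q, Amb Q x x k l * (starRingEnd ℂ) (Amb Q x x k l) from
        Finset.sum_congr rfl fun k _ => Finset.sum_congr rfl fun l _ =>
          (Complex.mul_conj _).symm]
      rw [moyal_complex]
      have hshift : ∀ n : ZMod Q,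
          ∑ k : ZMod Q, Complex.normSq (x (n - k)) = 1 := by
        intro n
        have he := Fintype.sum_equiv (Equiv.subLeft n)
          (fun k => Complex.normSq (x (n - k))) (fun j => Complex.normSq (x j)) (fun k => rfl)
        rw [he]; exact hx'
      have : ∑ k : ZMod Q, ∑ n : ZMod Q,
          (Complex.normSq (x n) : ℂ) * (Complex.normSq (x (n - k)) : ℂ) = 1 := by
        rw [Finset.sum_comm]
        calc ∑ n : ZMod Q, ∑ k : ZMod Q,
              (Complex.normSq (x n) : ℂ) * (Complex.normSq (x (n - k)) : ℂ)
            = ∑ n : ZMod Q, (Complex.normSq (x n) : ℂ) *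
                ∑ k : ZMod Q, (Complex.normSq (x (n - k)) : ℂ) := by
              exact Finset.sum_congr rfl fun n _ => (Finset.mul_sum _ _ _).symm
          _ = ∑ n : ZMod Q, (Complex.normSq (x n) : ℂ) := by
              refine Finset.sum_congr rfl fun n _ => ?_
              have := hshift n
              rw [show (∑ k : ZMod Q, ((Complex.normSq (x (n - k)) : ℂ)))
                  = ((∑ k : ZMod Q, Complex.normSq (x (n - k)) : ℝ) : ℂ) by push_cast; rfl,
                this, Complex.ofReal_one, mul_one]
          _ = 1 := by
              rw [show (∑ n : ZMod Q, ((Complex.normSq (x n) : ℂ)))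
                  = ((∑ n : ZMod Q, Complex.normSq (x n) : ℝ) : ℂ) by push_cast; rfl, hx',
                Complex.ofReal_one]
      rw [this, mul_one]
    exact_mod_cast hC
  set S := Finset.univ.filter
    (fun p : ZMod Q × ZMod Q => ‖Amb Q x x p.1 p.2‖ = 1) with hS
  have hcard : (S.card : ℝ) = ∑ p ∈ S, Complex.normSq (Amb Q x x p.1 p.2) := by
    have hone : ∀ p ∈ S, Complex.normSq (Amb Q x x p.1 p.2) = 1 := fun p hp => by
      have h1 := (Finset.mem_filter.mp hp).2
      rw [Complex.normSq_eq_norm_sq, h1, one_pow]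
    rw [Finset.sum_congr rfl hone]
    simp
  have hle : (S.card : ℝ) ≤ Q := by
    rw [hcard, ← hmoyal]
    exact Finset.sum_le_sum_of_subset_of_nonneg (Finset.filter_subset _ _)
      (fun p _ _ => Complex.normSq_nonneg _)
  exact_mod_cast hle
end

section
/- Let T be a maximal commutative subgroup of the Heisenberg-Weyl group on ℂ^{MN} and let v be a common unit eigenvector of all elements of T. Then for any group element h = e^{2πi m/(MN)} D_{(k,l)}: |⟨v, h v⟩| = 1 if h ∈ T, and ⟨v, h v⟩ = 0 if h ∉ T. -/
open Complex BigOperators Finset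

/-- The phase-scaled Heisenberg operator `e^{2πi m/Q} D_{(k,l)}` corresponding to the
Heisenberg-Weyl group element parametrized by `(k, l, m)`. -/
noncomputable def hwOp (Q : ℕ) (t : ZMod Q × ZMod Q × ZMod Q) :
    (ZMod Q → ℂ) → (ZMod Q → ℂ) :=
  fun x n => ch Q t.2.2 * HeisD Q t.1 t.2.1 x n

lemma ch_eq (Q : ℕ) (a : ZMod Q) :
    ch Q a = Complex.exp (((2 * Real.pi * a.val / Q : ℝ) : ℂ) * Complex.I) := by
  rw [ch]; congr 1; push_cast; ring

lemma ch_abs (Q : ℕ) (a : ZMod Q) : ‖ch Q a‖ = 1 := by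
  rw [ch_eq]; exact Complex.norm_exp_ofReal_mul_I _

lemma ch_ne_zero (Q : ℕ) (a : ZMod Q) : ch Q a ≠ 0 := Complex.exp_ne_zero _

lemma ch_mul_conj (Q : ℕ) (a : ZMod Q) : ch Q a * (starRingEnd ℂ) (ch Q a) = 1 := by
  rw [Complex.mul_conj, Complex.normSq_eq_norm_sq, ch_abs]; norm_num

lemma ch_natCast (Q : ℕ) [NeZero Q] (n : ℕ) :
    ch Q (n : ZMod Q) = Complex.exp (2 * Real.pi * Complex.I * n / Q) := by
  have hQ : (Q : ℂ) ≠ 0 := Nat.cast_ne_zero.mpr (NeZero.ne Q)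
  rw [ch, ZMod.val_natCast]
  obtain ⟨d, hd⟩ : ∃ d, n = Q * d + n % Q := ⟨n / Q, (Nat.div_add_mod n Q).symm⟩
  have hc : (n : ℂ) = (Q : ℂ) * d + ((n % Q : ℕ) : ℂ) := by exact_mod_cast congrArg (Nat.cast : ℕ → ℂ) hd
  have key : 2 * (Real.pi : ℂ) * Complex.I * n / Q =
      (((d : ℕ) : ℤ) : ℂ) * (2 * Real.pi * Complex.I) +
      2 * Real.pi * Complex.I * ((n % Q : ℕ) : ℂ) / Q := by
    rw [hc]
    push_cast
    field_simp
  rw [key, Complex.exp_add, Complex.exp_int_mul_two_pi_mul_I]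
  ring

lemma ch_eq_one_iff (Q : ℕ) [NeZero Q] (a : ZMod Q) : ch Q a = 1 ↔ a = 0 := by
  constructor
  · intro h
    rw [ch, Complex.exp_eq_one_iff] at h
    obtain ⟨k, hk⟩ := h
    have hQ : (Q : ℂ) ≠ 0 := Nat.cast_ne_zero.mpr (NeZero.ne Q)
    have hI : (2 * (Real.pi : ℂ) * Complex.I) ≠ 0 := by
      simp [Real.pi_ne_zero, Complex.I_ne_zero]
    have h3 : (2 * (Real.pi : ℂ) * Complex.I) * ((a.val : ℂ) / Q) =
        (2 * (Real.pi : ℂ) * Complex.I) * k := by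
      linear_combination hk
    have h4 : (a.val : ℂ) / Q = k := mul_left_cancel₀ hI h3
    rw [div_eq_iff hQ] at h4
    have h2 : (a.val : ℤ) = k * Q := by exact_mod_cast h4
    have h5 : (a.val : ℤ) < Q := by exact_mod_cast ZMod.val_lt a
    have h6 : (0 : ℤ) ≤ (a.val : ℤ) := Int.ofNat_nonneg _
    have hQ' : (0 : ℤ) < Q := by exact_mod_cast Nat.pos_of_ne_zero (NeZero.ne Q)
    have hk0 : k = 0 := by
      rcases lt_trichotomy k 0 with hlt | h0 | hgt
      · nlinarith
      · exact h0
      · nlinarith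
    have : a.val = 0 := by
      have h8 := h2
      rw [hk0, zero_mul] at h8
      exact_mod_cast h8
    exact (ZMod.val_eq_zero a).mp this
  · intro h; simp [h, ch]

lemma hwOp_comp (Q : ℕ) [NeZero Q] (t1 t2 : ZMod Q × ZMod Q × ZMod Q)
    (x : ZMod Q → ℂ) (n : ZMod Q) :
    hwOp Q t1 (hwOp Q t2 x) n =
      ch Q (t1.2.1 * t2.1) *
        hwOp Q (t1.1 + t2.1, t1.2.1 + t2.2.1, t1.2.2 + t2.2.2) x n := by
  obtain ⟨k1, l1, m1⟩ := t1
  obtain ⟨k2, l2, m2⟩ := t2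
  simp only [hwOp, HeisD]
  have e1 : n - (k1 + k2) = n - k1 - k2 := by ring
  have e2 : l1 * (n - k1) = l1 * k2 + l1 * (n - k1 - k2) := by ring
  have e3 : (l1 + l2) * (n - k1 - k2) = l1 * (n - k1 - k2) + l2 * (n - k1 - k2) := by ring
  rw [e1, e2, e3, ch_add, ch_add, ch_add]
  ring

lemma hwOp_comm_phase (Q : ℕ) [NeZero Q] (t1 t2 : ZMod Q × ZMod Q × ZMod Q)
    (x : ZMod Q → ℂ) (n : ZMod Q) :
    ch Q (t2.2.1 * t1.1) * hwOp Q t1 (hwOp Q t2 x) n =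
      ch Q (t1.2.1 * t2.1) * hwOp Q t2 (hwOp Q t1 x) n := by
  rw [hwOp_comp, hwOp_comp]
  rw [add_comm t2.1 t1.1, add_comm t2.2.1 t1.2.1, add_comm t2.2.2 t1.2.2]
  ring

lemma hwOp_smul (Q : ℕ) (t : ZMod Q × ZMod Q × ZMod Q) (c : ℂ) (x : ZMod Q → ℂ) :
    hwOp Q t (fun n => c * x n) = fun n => c * hwOp Q t x n := by
  funext n; simp only [hwOp, HeisD]; ring

lemma hwOp_inner (Q : ℕ) [NeZero Q] (t : ZMod Q × ZMod Q × ZMod Q) (x y : ZMod Q → ℂ) :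
    ∑ n : ZMod Q, hwOp Q t x n * (starRingEnd ℂ) (hwOp Q t y n) =
      ∑ n : ZMod Q, x n * (starRingEnd ℂ) (y n) := by
  have step : ∀ n : ZMod Q, hwOp Q t x n * (starRingEnd ℂ) (hwOp Q t y n) =
      x (n - t.1) * (starRingEnd ℂ) (y (n - t.1)) := by
    intro n
    simp only [hwOp, HeisD, map_mul]
    have h1 := ch_mul_conj Q t.2.2
    have h2 := ch_mul_conj Q (t.2.1 * (n - t.1))
    linear_combination (x (n - t.1) * (starRingEnd ℂ) (y (n - t.1)) * ch Q (t.2.1 * (n - t.1)) *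
        (starRingEnd ℂ) (ch Q (t.2.1 * (n - t.1)))) * h1 +
      (x (n - t.1) * (starRingEnd ℂ) (y (n - t.1))) * h2
  rw [Finset.sum_congr rfl fun n _ => step n]
  exact Fintype.sum_equiv (Equiv.subRight t.1)
    (fun n => x (n - t.1) * (starRingEnd ℂ) (y (n - t.1)))
    (fun n => x n * (starRingEnd ℂ) (y n)) (fun n => rfl)

/-- Let `T` be a maximal commutative subgroup of the Heisenberg-Weyl group on `ℂ^Q`
(elements parametrized by `(k,l,m) ↦ e^{2πi m/Q} D_{(k,l)}`), and let `v` be a common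
unit eigenvector of all elements of `T` (with unimodular eigenvalues). Then for any
group element `h`: `|⟨v, h v⟩| = 1` if `h ∈ T`, and `⟨v, h v⟩ = 0` if `h ∉ T`. -/
theorem max_comm_subgroup_ambiguity (Q : ℕ) [NeZero Q]
    (T : Set (ZMod Q × ZMod Q × ZMod Q))
    (hTsub : ∀ t1 ∈ T, ∀ t2 ∈ T, ∃ t3 ∈ T,
        ∀ x : ZMod Q → ℂ, hwOp Q t1 (hwOp Q t2 x) = hwOp Q t3 x)
    (hTone : (0, 0, 0) ∈ T)
    (hTinv : ∀ t ∈ T, ∃ t' ∈ T, ∀ x : ZMod Q → ℂ, hwOp Q t (hwOp Q t' x) = x)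
    (hTcomm : ∀ t1 ∈ T, ∀ t2 ∈ T, ∀ x : ZMod Q → ℂ,
        hwOp Q t1 (hwOp Q t2 x) = hwOp Q t2 (hwOp Q t1 x))
    (hTmax : ∀ h : ZMod Q × ZMod Q × ZMod Q, h ∉ T →
        ∃ t ∈ T, ∃ x : ZMod Q → ℂ, hwOp Q h (hwOp Q t x) ≠ hwOp Q t (hwOp Q h x))
    (v : ZMod Q → ℂ) (hv : ∑ n : ZMod Q, ‖v n‖ ^ 2 = 1)
    (heig : ∀ t ∈ T, ∃ lam : ℂ, ‖lam‖ = 1 ∧ hwOp Q t v = fun n => lam * v n) :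
    ∀ h : ZMod Q × ZMod Q × ZMod Q,
      (h ∈ T → ‖∑ n : ZMod Q, v n * (starRingEnd ℂ) (hwOp Q h v n)‖ = 1)
      ∧ (h ∉ T → ∑ n : ZMod Q, v n * (starRingEnd ℂ) (hwOp Q h v n) = 0) := by
  intro h
  constructor
  · -- h ∈ T
    intro hT
    obtain ⟨lam, hlamabs, hlv⟩ := heig h hT
    have hsum : ∑ n : ZMod Q, v n * (starRingEnd ℂ) (hwOp Q h v n) =
        (starRingEnd ℂ) lam * ∑ n : ZMod Q, ((‖v n‖ : ℂ)) ^ 2 := by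
      rw [Finset.mul_sum]
      refine Finset.sum_congr rfl fun n _ => ?_
      rw [hlv]
      simp only [map_mul]
      rw [show v n * ((starRingEnd ℂ) lam * (starRingEnd ℂ) (v n)) =
        (starRingEnd ℂ) lam * (v n * (starRingEnd ℂ) (v n)) by ring]
      rw [Complex.mul_conj, Complex.normSq_eq_norm_sq]
      norm_cast
    have hsum2 : ∑ n : ZMod Q, ((‖v n‖ : ℂ)) ^ 2 = 1 := by
      rw [show ∑ n : ZMod Q, ((‖v n‖ : ℂ)) ^ 2 = ((∑ n : ZMod Q, ‖v n‖ ^ 2 : ℝ) : ℂ) by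
        push_cast; rfl, hv]
      norm_num
    rw [hsum, hsum2, mul_one, Complex.norm_conj, hlamabs]
  · -- h ∉ T
    intro hT
    set S := ∑ n : ZMod Q, v n * (starRingEnd ℂ) (hwOp Q h v n) with hS
    obtain ⟨t, htT, x, hx⟩ := hTmax h hT
    obtain ⟨lam, hlamabs, hlv⟩ := heig t htT
    have hlam0 : lam ≠ 0 := by
      intro h0; rw [h0] at hlamabs; simp at hlamabs
    have hconjlam : (starRingEnd ℂ) lam = lam⁻¹ := by
      have := Complex.mul_conj lam
      rw [Complex.normSq_eq_norm_sq, hlamabs] at this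
      field_simp at this ⊢
      push_cast at this
      linear_combination this
    set c := ch Q (h.2.1 * t.1 - t.2.1 * h.1) with hc
    have hcsplit : ch Q (h.2.1 * t.1) = c * ch Q (t.2.1 * h.1) := by
      rw [hc, ← ch_add]; congr 1; ring
    have hcne : c ≠ 1 := by
      intro h1
      apply hx
      funext n
      have hcp := hwOp_comm_phase Q h t x n
      rw [hcsplit, h1, one_mul] at hcp
      exact mul_left_cancel₀ (ch_ne_zero Q (t.2.1 * h.1)) hcp
    have key : ∀ n, hwOp Q h v n = (c / lam) * hwOp Q t (hwOp Q h v) n := by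
      intro n
      have hcp := hwOp_comm_phase Q h t v n
      rw [hlv, hwOp_smul, hcsplit] at hcp
      have h2 : lam * hwOp Q h v n = c * hwOp Q t (hwOp Q h v) n :=
        mul_left_cancel₀ (ch_ne_zero Q (t.2.1 * h.1))
          (by linear_combination hcp)
      field_simp
      linear_combination h2
    have inner_t : ∀ w : ZMod Q → ℂ,
        ∑ n : ZMod Q, v n * (starRingEnd ℂ) (hwOp Q t w n) =
          lam⁻¹ * ∑ n : ZMod Q, v n * (starRingEnd ℂ) (w n) := by
      intro w
      have hv' : ∀ n, v n = lam⁻¹ * hwOp Q t v n := by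
        intro n; rw [hlv]; field_simp
      calc ∑ n : ZMod Q, v n * (starRingEnd ℂ) (hwOp Q t w n)
          = lam⁻¹ * ∑ n : ZMod Q, hwOp Q t v n * (starRingEnd ℂ) (hwOp Q t w n) := by
            rw [Finset.mul_sum]
            refine Finset.sum_congr rfl fun n _ => ?_
            rw [hv' n]; ring
        _ = lam⁻¹ * ∑ n : ZMod Q, v n * (starRingEnd ℂ) (w n) := by rw [hwOp_inner]
    have hSeq : S = (starRingEnd ℂ) c * S := by
      calc S = ∑ n : ZMod Q, v n * (starRingEnd ℂ) ((c / lam) * hwOp Q t (hwOp Q h v) n) := by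
            rw [hS]; exact Finset.sum_congr rfl fun n _ => by rw [← key n]
        _ = (starRingEnd ℂ) (c / lam) *
              ∑ n : ZMod Q, v n * (starRingEnd ℂ) (hwOp Q t (hwOp Q h v) n) := by
            rw [Finset.mul_sum]
            refine Finset.sum_congr rfl fun n _ => ?_
            rw [map_mul]; ring
        _ = (starRingEnd ℂ) (c / lam) * (lam⁻¹ * S) := by rw [inner_t]
        _ = (starRingEnd ℂ) c * S := by
            rw [map_div₀, hconjlam]
            field_simp
    have hcne' : (starRingEnd ℂ) c ≠ 1 := by
      intro h1
      apply hcne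
      have := congrArg (starRingEnd ℂ) h1
      simpa using this
    have : ((starRingEnd ℂ) c - 1) * S = 0 := by linear_combination hSeq.symm
    rcases mul_eq_zero.mp this with h1 | h1
    · exact absurd (by linear_combination h1) hcne'
    · exact h1
end

section
/- Let v be the pulsone sequence in ℂ^{MN} defined by v[n] = (1/√N) if n ≡ k0 (mod M) with (n-k0)/M ≡ p giving factor e^{2πi p l0/N}, i.e., v[k0 + pM] = (1/√N) e^{2πi p l0/N} for p ∈ {0,...,N-1} and v[n] = 0 otherwise. Then for a, b integers, D_{(aM, bN)} v = e^{2πi b k0/M} e^{-2πi a l0/N} v. -/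
open Complex BigOperators Finset

/-- The pulsone sequence: `v[k0 + pM] = (1/√N) e^{2πi p l0 / N}` for `0 ≤ p < N`,
and `v[n] = 0` when `n ≢ k0 (mod M)`. -/
noncomputable def pulsone (M N : ℕ) (k0 l0 : ℕ) : ZMod (M * N) → ℂ :=
  fun n => if n.val % M = k0 then
      (1 / Real.sqrt N) *
        Complex.exp (2 * Real.pi * Complex.I * (n.val / M : ℕ) * l0 / N)
    else 0

lemma cexp_congr (Q : ℕ) [NeZero Q] {u v : ℤ} (h : (Q:ℤ) ∣ u - v) :
    Complex.exp (2 * Real.pi * Complex.I * u / Q)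
      = Complex.exp (2 * Real.pi * Complex.I * v / Q) := by
  obtain ⟨t, ht⟩ := h
  have hQ : (Q:ℂ) ≠ 0 := Nat.cast_ne_zero.mpr (NeZero.ne Q)
  have hu : (u:ℂ) = v + Q * t := by
    have : u = v + Q * t := by linarith
    rw [this]; push_cast; ring
  rw [show (2 * Real.pi * Complex.I * u / Q : ℂ)
      = 2 * Real.pi * Complex.I * v / Q + t * (2 * Real.pi * Complex.I) from by
    rw [hu]; field_simp]
  rw [Complex.exp_add, Complex.exp_int_mul_two_pi_mul_I, mul_one]

/-- The pulsone is a common eigenvector of the Heisenberg operators `D_{(aM, bN)}`,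
with eigenvalue `e^{2πi b k0 / M} e^{-2πi a l0 / N}`. -/
theorem pulsone_eigenvector (M N : ℕ) [NeZero M] [NeZero N]
    (k0 l0 : ℕ) (hk0 : k0 < M) (hl0 : l0 < N) (a b : ℤ) (n : ZMod (M * N)) :
    HeisD (M * N) ((a * M : ℤ) : ZMod (M * N)) ((b * N : ℤ) : ZMod (M * N))
        (pulsone M N k0 l0) n
      = Complex.exp (2 * Real.pi * Complex.I * b * k0 / M) *
          Complex.exp (-(2 * Real.pi * Complex.I) * a * l0 / N) *
            pulsone M N k0 l0 n := by
  have hMN : NeZero (M*N) := by infer_instance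
  set m : ZMod (M*N) := n - ((a * M : ℤ) : ZMod (M*N)) with hm
  have hmcast : ((m.val : ℕ) : ZMod (M*N)) = m := by simp [ZMod.natCast_val, ZMod.cast_id]
  have hncast : ((n.val : ℕ) : ZMod (M*N)) = n := by simp [ZMod.natCast_val, ZMod.cast_id]
  -- residue mod M is unchanged
  have h2 : ((m.val : ℕ) : ZMod M) = ((n.val : ℕ) : ZMod M) := by
    have h3 : ((m.val : ℕ) : ZMod (M*N)) = ((n.val : ℕ) : ZMod (M*N)) - ((a * M : ℤ) : ZMod (M*N)) := by
      rw [hmcast, hncast, hm]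
    have h4 := congrArg (ZMod.castHom (dvd_mul_right M N) (ZMod M)) h3
    have h5 : ((a * M : ℤ) : ZMod M) = 0 := by
      push_cast [ZMod.natCast_self]; ring
    rw [map_sub, map_natCast, map_natCast, map_intCast, h5, sub_zero] at h4
    exact h4
  have hmod : m.val % M = n.val % M := (ZMod.natCast_eq_natCast_iff _ _ _).mp h2
  unfold HeisD pulsone ch
  by_cases h : n.val % M = k0
  · rw [if_pos (hmod.trans h), if_pos h]
    set p := n.val / M with hp
    set q := m.val / M with hq
    -- integer congruence for m.val
    have hdvd1 : ((M*N : ℕ):ℤ) ∣ ((m.val:ℤ) - ((n.val:ℤ) - a*M)) := by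
      have h3 : ((m.val : ℤ) : ZMod (M*N)) = (((n.val:ℤ) - a*M : ℤ) : ZMod (M*N)) := by
        push_cast
        rw [hmcast, hncast, hm]
        push_cast
        ring
      have := (ZMod.intCast_eq_intCast_iff _ _ _).mp h3
      exact Int.ModEq.dvd this.symm
    have hmk : m.val % M = k0 := hmod.trans h
    have hmval : (m.val : ℤ) = M * q + k0 := by
      have h6 : M * q + k0 = m.val := by rw [hq, ← hmk]; exact Nat.div_add_mod m.val M
      exact_mod_cast h6.symm
    have hnval : (n.val : ℤ) = M * p + k0 := by
      have h6 : M * p + k0 = n.val := by rw [hp, ← h]; exact Nat.div_add_mod n.val M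
      exact_mod_cast h6.symm
    have hdvd2 : (N:ℤ) ∣ ((q:ℤ) - p + a) := by
      have hM0 : (M:ℤ) ≠ 0 := Int.natCast_ne_zero.mpr (NeZero.ne M)
      have : (M:ℤ) * N ∣ (M:ℤ) * ((q:ℤ) - p + a) := by
        have h4 : (M:ℤ) * ((q:ℤ) - p + a) = (m.val:ℤ) - ((n.val:ℤ) - a*M) := by
          rw [hmval, hnval]; ring
        rw [h4]
        exact_mod_cast hdvd1
      exact (mul_dvd_mul_iff_left hM0).mp this
    obtain ⟨c, hc⟩ := hdvd2
    set w := (((b * N : ℤ) : ZMod (M*N)) * m).val with hw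
    have hwd : ((M*N : ℕ):ℤ) ∣ ((w:ℤ) - b * N * m.val) := by
      have h5 : ((w : ℕ) : ZMod (M*N)) = ((b * N : ℤ) : ZMod (M*N)) * m := by
        rw [hw]; simp [ZMod.natCast_val, ZMod.cast_id]
      have h5' : ((w : ℤ) : ZMod (M*N)) = ((b * N * (m.val:ℤ) : ℤ) : ZMod (M*N)) := by
        have hwz : ((w : ℤ) : ZMod (M*N)) = ((w : ℕ) : ZMod (M*N)) := by push_cast; ring
        rw [hwz, h5]
        push_cast [hmcast]
        ring
      exact Int.ModEq.dvd ((ZMod.intCast_eq_intCast_iff _ _ _).mp h5').symm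
    obtain ⟨d, hd⟩ := hwd
    push_cast at hd
    have hMc : (M:ℂ) ≠ 0 := Nat.cast_ne_zero.mpr (NeZero.ne M)
    have hNc : (N:ℂ) ≠ 0 := Nat.cast_ne_zero.mpr (NeZero.ne N)
    have hMNc : ((M*N:ℕ):ℂ) ≠ 0 := Nat.cast_ne_zero.mpr (NeZero.ne (M*N))
    have e1 : Complex.exp (2 * Real.pi * Complex.I * (q:ℕ) * l0 / N) *
        Complex.exp (2 * Real.pi * Complex.I * (w:ℕ) / (M*N:ℕ)) =
        Complex.exp (2 * Real.pi * Complex.I * ((q * l0 * M + w : ℤ)) / (M*N:ℕ)) := by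
      rw [← Complex.exp_add]
      congr 1
      field_simp
      push_cast
      ring
    have e2 : Complex.exp (2 * Real.pi * Complex.I * b * k0 / M) *
        (Complex.exp (-(2 * Real.pi * Complex.I) * a * l0 / N) *
          Complex.exp (2 * Real.pi * Complex.I * (p:ℕ) * l0 / N)) =
        Complex.exp (2 * Real.pi * Complex.I * ((b * k0 * N - a * l0 * M + p * l0 * M : ℤ)) / (M*N:ℕ)) := by
      rw [← Complex.exp_add, ← Complex.exp_add]
      congr 1
      field_simp
      push_cast
      ring
    have hUV : ((M*N:ℕ):ℤ) ∣ ((q * l0 * M + w : ℤ) - (b * k0 * N - a * l0 * M + p * l0 * M)) := by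
      refine ⟨l0 * c + b * q + d, ?_⟩
      push_cast
      linear_combination (M * l0 : ℤ) * hc + hd + (b * N) * hmval
    have key : Complex.exp (2 * Real.pi * Complex.I * (q:ℕ) * l0 / N) *
        Complex.exp (2 * Real.pi * Complex.I * (w:ℕ) / (M*N:ℕ)) =
        Complex.exp (2 * Real.pi * Complex.I * b * k0 / M) *
        (Complex.exp (-(2 * Real.pi * Complex.I) * a * l0 / N) *
          Complex.exp (2 * Real.pi * Complex.I * (p:ℕ) * l0 / N)) := by
      rw [e1, e2]
      exact cexp_congr (M*N) hUV
    push_cast at key ⊢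
    linear_combination ((1 : ℂ) / Real.sqrt N) * key
  · rw [if_neg (fun hc => h (hmod.symm.trans hc)), if_neg h]
    ring
end
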